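/- Let V be a finite type with n elements, n ≥ 2, and let σ be a fixed-point-free permutation of V. Define the matrix M_σ : Matrix V V ℚ by M_σ u v = (if u = v then 1 else 0) − (if u = σ v then 1 else 0). Then σ is a single cycle through all n vertices (i.e., σ.IsCycle and σ.support = Finset.univ) if and only if Matrix.rank M_σ = n − 1. -/

import Mathlib

/-! The kernel of `M_σ` consists of the functions `x` with `x ∘ σ = x`, i.e. the functions that
are constant on the cycles of `σ` (fixed points counted as cycles). It is therefore isomorphic to
the space of functions on the set of cycles, and rank–nullity gives `rank M_σ = n - #cycles`.
A fixed-point-free `σ` is a single cycle through all vertices exactly when it has one cycle. -/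

open Function Matrix
namespace Equiv.Perm

variable {V : Type*} [DecidableEq V]

def incidenceMatrix (R : Type*) [Ring R] (σ : Perm V) : Matrix V V R :=
  fun u v => (if u = v then 1 else 0) - (if u = σ v then 1 else 0)

theorem incidenceMatrix_eq_one_sub_permMatrix (R : Type*) [Ring R] (σ : Perm V) :
    incidenceMatrix R σ = 1 - σ⁻¹.permMatrix R := by
  ext u v
  simp [incidenceMatrix, Matrix.one_apply, PEquiv.toMatrix_apply, eq_symm_apply, eq_comm]

theorem incidenceMatrix_mulVec_eq_zero_iff [Fintype V] {R : Type*} [CommRing R] (σ : Perm V)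
    (x : V → R) : incidenceMatrix R σ *ᵥ x = 0 ↔ x ∘ σ = x := by
  rw [incidenceMatrix_eq_one_sub_permMatrix, sub_mulVec, one_mulVec, permMatrix_mulVec,
    sub_eq_zero, eq_comm, inv_def, comp_symm_eq, eq_comm]

theorem SameCycle.apply_eq_of_comp_eq_self {α β : Type*} [Finite α] {σ : Perm α} {a b : α}
    (h : σ.SameCycle a b) {x : α → β} (hx : x ∘ σ = x) : x a = x b := by
  obtain ⟨n, rfl⟩ := h.exists_nat_pow_eq
  have hsemi : Semiconj x σ id := congrFun hx
  simpa [coe_pow] using (hsemi.iterate_right n a).symm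

noncomputable def kerIncidenceMatrixEquiv [Fintype V] (K : Type*) [Field K] (σ : Perm V) :
    LinearMap.ker (incidenceMatrix K σ).mulVecLin ≃ₗ[K] (Quotient (SameCycle.setoid σ) → K) :=
  LinearEquiv.symm <| LinearEquiv.ofBijective
    ((LinearMap.funLeft K K (Quotient.mk _)).codRestrict _ fun f => by
      rw [LinearMap.mem_ker, mulVecLin_apply, incidenceMatrix_mulVec_eq_zero_iff]
      exact funext fun v => congrArg f (Quotient.sound (sameCycle_apply_left.2 (.refl σ v))))
    ⟨fun f g hfg => LinearMap.funLeft_injective_of_surjective _ _ _ Quotient.mk_surjective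
      (congrArg Subtype.val hfg),
    fun x => ⟨Quotient.lift x.1 fun _ _ h =>
      h.apply_eq_of_comp_eq_self ((incidenceMatrix_mulVec_eq_zero_iff σ x.1).1 x.2), rfl⟩⟩

theorem rank_incidenceMatrix_add_card_quotient [Fintype V] (K : Type*) [Field K] (σ : Perm V) :
    (incidenceMatrix K σ).rank + Nat.card (Quotient (SameCycle.setoid σ)) = Fintype.card V := by
  classical
  rw [Nat.card_eq_fintype_card, rank, ← Module.finrank_fintype_fun_eq_card K,
    ← (kerIncidenceMatrixEquiv K σ).finrank_eq, LinearMap.finrank_range_add_finrank_ker,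
    Module.finrank_fintype_fun_eq_card]

theorem card_quotient_sameCycle_eq_one_iff {α : Type*} [Nonempty α] (σ : Perm α) :
    Nat.card (Quotient (SameCycle.setoid σ)) = 1 ↔ ∀ a b, σ.SameCycle a b := by
  simp [Nat.card_eq_one_iff_unique, subsingleton_iff, Quotient.forall, Quotient.eq,
    nonempty_quotient_iff, SameCycle.setoid, ‹Nonempty α›]

theorem isCycle_and_support_eq_univ_iff [Fintype V] [Nonempty V] {σ : Perm V}
    (hσ : ∀ v, σ v ≠ v) : σ.IsCycle ∧ σ.support = Finset.univ ↔ ∀ a b, σ.SameCycle a b := by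
  have hsupport : σ.support = Finset.univ := by ext v; simp [hσ v]
  refine ⟨fun ⟨hc, _⟩ a b => hc.sameCycle (hσ a) (hσ b), fun h => ⟨?_, hsupport⟩⟩
  obtain ⟨a⟩ := ‹Nonempty V›
  exact ⟨a, hσ a, fun b _ => h a b⟩

end Equiv.Perm

open Equiv.Perm in
/-- A fixed-point-free permutation `σ` of an `n`-element type (`n ≥ 2`) is a single cycle
through all vertices if and only if the incidence matrix of its functional digraph
has rank `n - 1`. -/
theorem isCycle_iff_rank_eq {V : Type*} [Fintype V] [DecidableEq V] (n : ℕ)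
    (hn : Fintype.card V = n) (h2 : 2 ≤ n) (σ : Equiv.Perm V) (hσ : ∀ v, σ v ≠ v) :
    (σ.IsCycle ∧ σ.support = Finset.univ) ↔
      Matrix.rank (fun u v : V =>
          ((if u = v then 1 else 0) - (if u = σ v then 1 else 0) : ℚ)) = n - 1 := by
  have : Nonempty V := Fintype.card_pos_iff.1 (by omega)
  have hrank := rank_incidenceMatrix_add_card_quotient ℚ σ
  have : Nonempty (Quotient (SameCycle.setoid σ)) := (nonempty_quotient_iff _).2 ‹_›
  have hcard : 0 < Nat.card (Quotient (SameCycle.setoid σ)) := Nat.card_pos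
  change _ ↔ (incidenceMatrix ℚ σ).rank = n - 1
  rw [isCycle_and_support_eq_univ_iff hσ, ← card_quotient_sameCycle_eq_one_iff]
  omega
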